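/- Let u1, u2 be positive reals with max{u1, u2} ≥ λ/(4κ), κ ≥ 0 and 0 < λ ≤ 2κ. Let U ∈ ℝ^{1×N1} have first two entries u1, u2 and zeros elsewhere, and b = 2κ. Then the set of minimizers of λ‖x‖₁ + (u1 x1 + u2 x2 − 2κ)² equals: {((4u1κ−λ)/(2u1²)) e1} if u1 > u2; {((4u2κ−λ)/(2u2²)) e2} if u1 < u2; and {((4u1κ−λ)/(2u1²))(t e1 + (1−t) e2) : t ∈ [0,1]} if u1 = u2. -/

import Mathlib

/-!
Write `s = ∑ i, w i * x i` and `u = maxᵢ |w i|`, so that `s ≤ u * ‖x‖₁`. Completing the square,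
`lam * ‖x‖₁ + (s - b)² = b² - d² + lam / u * (u * ‖x‖₁ - s) + (s - d)²` with `d = b - lam / (2 * u)`,
and `d ≥ 0` makes the right-hand side attain `b² - d²`. Hence the minimizers are the `x` with `s = d`
and equality `w i * x i = u * |x i|` for all `i`. For `w = (u1, u2, 0, …, 0)` this confines `x` to
the coordinates where `u_i` is maximal, with nonnegative entries summing to `d / u`.
-/

open Finset

def minimizers {α : Type*} (f : α → ℝ) : Set α := {x | ∀ y, f x ≤ f y}

theorem minimizers_eq_setOf_eq_zero {α : Type*} {f g : α → ℝ} (m : ℝ)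
    (hfg : ∀ x, f x = m + g x) (hg : ∀ x, 0 ≤ g x) (hz : ∃ z, g z = 0) :
    minimizers f = {x | g x = 0} := by
  obtain ⟨z, hz⟩ := hz
  ext x
  simp only [minimizers, Set.mem_ofPred_eq, hfg]
  exact ⟨fun h => le_antisymm (by linarith [h z]) (hg x), fun h y => by linarith [hg y]⟩

theorem mul_le_mul_abs_of_abs_le {w u y : ℝ} (h : |w| ≤ u) : w * y ≤ u * |y| :=
  calc w * y ≤ |w| * |y| := by rw [← abs_mul]; exact le_abs_self _
    _ ≤ u * |y| := mul_le_mul_of_nonneg_right h (abs_nonneg y)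

theorem mul_eq_mul_abs_iff_of_abs_lt {w u y : ℝ} (h : |w| < u) : w * y = u * |y| ↔ y = 0 := by
  refine ⟨fun hy => ?_, fun hy => by simp [hy]⟩
  by_contra hy0
  have : |w| * |y| < u * |y| := mul_lt_mul_of_pos_right h (abs_pos.mpr hy0)
  linarith [abs_mul w y ▸ le_abs_self (w * y)]

theorem mul_eq_mul_abs_iff_nonneg {u y : ℝ} (hu : 0 < u) : u * y = u * |y| ↔ 0 ≤ y := by
  rw [mul_right_inj' hu.ne', eq_comm, abs_eq_self]

section Lasso

variable {ι : Type*} [Fintype ι]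

def lassoObjective (lam : ℝ) (w : ι → ℝ) (b : ℝ) (x : ι → ℝ) : ℝ :=
  lam * ∑ i, |x i| + (∑ i, w i * x i - b) ^ 2

theorem minimizers_lassoObjective {w : ι → ℝ} {u lam b : ℝ} {i₀ : ι}
    (hlam : 0 < lam) (hw : ∀ i, |w i| ≤ u) (hi₀ : |w i₀| = u) (hb : lam ≤ 2 * u * b) :
    minimizers (lassoObjective lam w b) =
      {x | (∀ i, w i * x i = u * |x i|) ∧ ∑ i, w i * x i = b - lam / (2 * u)} := by
  classical
  have hu : 0 < u := by
    refine lt_of_le_of_ne (hi₀ ▸ abs_nonneg _) fun hu => ?_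
    rw [← hu] at hb
    linarith
  set d := b - lam / (2 * u) with hd
  have hd0 : 0 ≤ d := by
    rw [hd, sub_nonneg, div_le_iff₀ (by positivity)]
    linarith
  have hgap : ∀ x : ι → ℝ, ∀ i, 0 ≤ u * |x i| - w i * x i := fun x i =>
    sub_nonneg.mpr (mul_le_mul_abs_of_abs_le (hw i))
  rw [minimizers_eq_setOf_eq_zero (b ^ 2 - d ^ 2)
    (g := fun x => lam / u * ∑ i, (u * |x i| - w i * x i) + (∑ i, w i * x i - d) ^ 2)]
  · ext x
    simp only [Set.mem_ofPred_eq]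
    rw [add_eq_zero_iff_of_nonneg (mul_nonneg (by positivity) (sum_nonneg fun i _ => hgap x i))
      (sq_nonneg _), mul_eq_zero, or_iff_right (by positivity),
      sum_eq_zero_iff_of_nonneg fun i _ => hgap x i, sq_eq_zero_iff, sub_eq_zero]
    simp only [mem_univ, true_implies, sub_eq_zero, eq_comm]
  · intro x
    rw [lassoObjective, sum_sub_distrib, ← mul_sum, hd]
    field_simp
    ring
  · exact fun x => add_nonneg (mul_nonneg (by positivity) (sum_nonneg fun i _ => hgap x i))
      (sq_nonneg _)
  · have hwi₀ : w i₀ ≠ 0 := by rw [← abs_pos, hi₀]; exact hu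
    set z : ι → ℝ := Pi.single i₀ (d / w i₀) with hz
    refine ⟨z, ?_⟩
    have hgap₀ : ∀ i, u * |z i| - w i * z i = 0 := by
      intro i
      rcases eq_or_ne i i₀ with rfl | hi
      · rw [hz, Pi.single_eq_same, abs_div, hi₀, abs_of_nonneg hd0]
        field_simp
        ring
      · simp [hz, hi]
    have hs : ∑ i, w i * z i = d := by
      simp [hz, Pi.single_apply, mul_div_cancel₀ _ hwi₀]
    simp [hgap₀, hs]

end Lasso

theorem exists_mem_Icc_eq_mul_and_eq_mul_one_sub_iff {a b c : ℝ} (hc : 0 ≤ c) :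
    (0 ≤ a ∧ 0 ≤ b ∧ a + b = c) ↔ ∃ t ∈ Set.Icc (0 : ℝ) 1, a = c * t ∧ b = c * (1 - t) := by
  constructor
  · rintro ⟨ha, hb, rfl⟩
    rcases (add_nonneg ha hb).eq_or_lt with h0 | hpos
    · exact ⟨0, ⟨le_rfl, zero_le_one⟩, by linarith, by linarith⟩
    · refine ⟨a / (a + b), ⟨by positivity, (div_le_one hpos).mpr (by linarith)⟩, ?_, ?_⟩
      · field_simp
      · field_simp
        ring
  · rintro ⟨t, ⟨ht0, ht1⟩, rfl, rfl⟩
    exact ⟨mul_nonneg hc ht0, mul_nonneg hc (by linarith), by ring⟩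

section TwoSpikes

variable {ι : Type*} [DecidableEq ι] {i₀ i₁ : ι}

theorem eq_single_add_single_iff {M : Type*} [AddZeroClass M] (h01 : i₀ ≠ i₁) {x : ι → M}
    {a b : M} :
    x = Pi.single i₀ a + Pi.single i₁ b ↔ x i₀ = a ∧ x i₁ = b ∧ ∀ i, i ≠ i₀ → i ≠ i₁ → x i = 0 := by
  constructor
  · rintro rfl
    simp +contextual [h01, h01.symm]
  · rintro ⟨ha, hb, hx⟩
    ext i
    rcases eq_or_ne i i₀ with rfl | h0
    · simp [ha, h01]
    rcases eq_or_ne i i₁ with rfl | h1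
    · simp [hb, h01.symm]
    · simp [hx i h0 h1, h0, h1]

variable [Fintype ι]

theorem sum_single_add_single_mul (u1 u2 : ℝ) (x : ι → ℝ) :
    ∑ i, (Pi.single i₀ u1 + Pi.single i₁ u2 : ι → ℝ) i * x i = u1 * x i₀ + u2 * x i₁ := by
  simp [add_mul, sum_add_distrib, Pi.single_apply, ite_mul]

theorem lassoObjective_single_add_single (lam u1 u2 b : ℝ) (x : ι → ℝ) :
    lassoObjective lam (Pi.single i₀ u1 + Pi.single i₁ u2) b x =
      lam * ∑ i, |x i| + (u1 * x i₀ + u2 * x i₁ - b) ^ 2 := by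
  rw [lassoObjective, sum_single_add_single_mul]

theorem mem_minimizers_lassoObjective_single_add_single_iff (h01 : i₀ ≠ i₁) {u1 u2 lam b : ℝ}
    (hu1 : 0 < u1) (hu2 : 0 < u2) (hlam : 0 < lam) (hb : lam ≤ 2 * max u1 u2 * b) {x : ι → ℝ} :
    x ∈ minimizers (lassoObjective lam (Pi.single i₀ u1 + Pi.single i₁ u2) b) ↔
      u1 * x i₀ = max u1 u2 * |x i₀| ∧ u2 * x i₁ = max u1 u2 * |x i₁| ∧
      (∀ i, i ≠ i₀ → i ≠ i₁ → x i = 0) ∧ u1 * x i₀ + u2 * x i₁ = b - lam / (2 * max u1 u2) := by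
  set w : ι → ℝ := Pi.single i₀ u1 + Pi.single i₁ u2 with hw
  have hw₀ : w i₀ = u1 := by simp [hw, h01]
  have hw₁ : w i₁ = u2 := by simp [hw, h01.symm]
  have hw_ne : ∀ i, i ≠ i₀ → i ≠ i₁ → w i = 0 := fun i h0 h1 => by simp [hw, h0, h1]
  have hu : 0 < max u1 u2 := hu1.trans_le (le_max_left _ _)
  have hwle : ∀ i, |w i| ≤ max u1 u2 := fun i => by
    rcases eq_or_ne i i₀ with rfl | h0
    · rw [hw₀, abs_of_pos hu1]; exact le_max_left _ _
    rcases eq_or_ne i i₁ with rfl | h1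
    · rw [hw₁, abs_of_pos hu2]; exact le_max_right _ _
    · rw [hw_ne i h0 h1, abs_zero]; exact hu.le
  obtain ⟨i, hi⟩ : ∃ i, |w i| = max u1 u2 := by
    rcases max_choice u1 u2 with h | h
    · exact ⟨i₀, by rw [hw₀, abs_of_pos hu1, h]⟩
    · exact ⟨i₁, by rw [hw₁, abs_of_pos hu2, h]⟩
  have hs : ∑ i, w i * x i = u1 * x i₀ + u2 * x i₁ := sum_single_add_single_mul u1 u2 x
  rw [minimizers_lassoObjective hlam hwle hi hb, Set.mem_ofPred_eq, hs]
  constructor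
  · rintro ⟨h, hs⟩
    refine ⟨hw₀ ▸ h i₀, hw₁ ▸ h i₁, fun i h0 h1 => ?_, hs⟩
    simpa [hw_ne i h0 h1, hu.ne', eq_comm] using h i
  · rintro ⟨h0, h1, hx, hs⟩
    refine ⟨fun i => ?_, hs⟩
    rcases eq_or_ne i i₀ with rfl | hi₀
    · rwa [hw₀]
    rcases eq_or_ne i i₁ with rfl | hi₁
    · rwa [hw₁]
    · simp [hw_ne i hi₀ hi₁, hx i hi₀ hi₁]

theorem minimizers_lassoObjective_single_add_single_of_lt (h01 : i₀ ≠ i₁) {u1 u2 lam b : ℝ}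
    (hu2 : 0 < u2) (h21 : u2 < u1) (hlam : 0 < lam) (hb : lam ≤ 2 * u1 * b) :
    minimizers (lassoObjective lam (Pi.single i₀ u1 + Pi.single i₁ u2) b) =
      {((2 * u1 * b - lam) / (2 * u1 ^ 2)) • Pi.single i₀ 1} := by
  have hu1 : 0 < u1 := hu2.trans h21
  have hmax : max u1 u2 = u1 := max_eq_left h21.le
  set c := (2 * u1 * b - lam) / (2 * u1 ^ 2) with hc
  have hc0 : 0 ≤ c := div_nonneg (by linarith) (by positivity)
  have huc : u1 * c = b - lam / (2 * u1) := by
    rw [hc]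
    field_simp
  ext x
  rw [mem_minimizers_lassoObjective_single_add_single_iff h01 hu1 hu2 hlam (by rwa [hmax]), hmax,
    mul_eq_mul_abs_iff_nonneg hu1, mul_eq_mul_abs_iff_of_abs_lt (by rwa [abs_of_pos hu2]),
    Set.mem_singleton_iff, show c • Pi.single i₀ 1 = Pi.single i₀ c + Pi.single i₁ 0 by
      simp [← Pi.single_smul],
    eq_single_add_single_iff h01]
  constructor
  · rintro ⟨-, hx₁, hx, hs⟩
    rw [hx₁, mul_zero, add_zero, ← huc] at hs
    exact ⟨mul_left_cancel₀ hu1.ne' hs, hx₁, hx⟩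
  · rintro ⟨hx₀, hx₁, hx⟩
    exact ⟨hx₀ ▸ hc0, hx₁, hx, by rw [hx₀, hx₁, huc, mul_zero, add_zero]⟩

theorem minimizers_lassoObjective_single_add_single_of_gt (h01 : i₀ ≠ i₁) {u1 u2 lam b : ℝ}
    (hu1 : 0 < u1) (h12 : u1 < u2) (hlam : 0 < lam) (hb : lam ≤ 2 * u2 * b) :
    minimizers (lassoObjective lam (Pi.single i₀ u1 + Pi.single i₁ u2) b) =
      {((2 * u2 * b - lam) / (2 * u2 ^ 2)) • Pi.single i₁ 1} := by
  rw [add_comm]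
  exact minimizers_lassoObjective_single_add_single_of_lt h01.symm hu1 h12 hlam hb

theorem minimizers_lassoObjective_single_add_single_self (h01 : i₀ ≠ i₁) {u lam b : ℝ}
    (hu : 0 < u) (hlam : 0 < lam) (hb : lam ≤ 2 * u * b) :
    minimizers (lassoObjective lam (Pi.single i₀ u + Pi.single i₁ u) b) =
      {x | ∃ t ∈ Set.Icc (0 : ℝ) 1,
        x = ((2 * u * b - lam) / (2 * u ^ 2)) • (t • Pi.single i₀ 1 + (1 - t) • Pi.single i₁ 1)} := by
  set c := (2 * u * b - lam) / (2 * u ^ 2) with hc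
  have hc0 : 0 ≤ c := div_nonneg (by linarith) (by positivity)
  have huc : u * c = b - lam / (2 * u) := by
    rw [hc]
    field_simp
  ext x
  simp only [Set.mem_ofPred_eq, smul_add, ← Pi.single_smul, smul_eq_mul, mul_one,
    eq_single_add_single_iff h01]
  rw [mem_minimizers_lassoObjective_single_add_single_iff h01 hu hu hlam (by rwa [max_self]),
    max_self, mul_eq_mul_abs_iff_nonneg hu, mul_eq_mul_abs_iff_nonneg hu, ← mul_add, ← huc,
    mul_right_inj' hu.ne']
  constructor
  · rintro ⟨hx₀, hx₁, hx, hs⟩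
    obtain ⟨t, ht, hx₀, hx₁⟩ :=
      (exists_mem_Icc_eq_mul_and_eq_mul_one_sub_iff hc0).mp ⟨hx₀, hx₁, hs⟩
    exact ⟨t, ht, hx₀, hx₁, hx⟩
  · rintro ⟨t, ht, hx₀, hx₁, hx⟩
    obtain ⟨hx₀, hx₁, hs⟩ :=
      (exists_mem_Icc_eq_mul_and_eq_mul_one_sub_iff hc0).mpr ⟨t, ht, hx₀, hx₁⟩
    exact ⟨hx₀, hx₁, hx, hs⟩

end TwoSpikes

theorem stmt_2 (N1 : ℕ) (hN : 2 ≤ N1) (u1 u2 κ lam : ℝ)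
    (hu1 : 0 < u1) (hu2 : 0 < u2) (hlam0 : 0 < lam) (hlam : lam ≤ 2 * κ)
    (hmax : lam / (4 * κ) ≤ max u1 u2) :
    let e1 : Fin N1 → ℝ := fun i => if (i : ℕ) = 0 then 1 else 0
    let e2 : Fin N1 → ℝ := fun i => if (i : ℕ) = 1 then 1 else 0
    let obj : (Fin N1 → ℝ) → ℝ := fun x =>
      lam * (∑ i, |x i|) + (u1 * x ⟨0, by omega⟩ + u2 * x ⟨1, by omega⟩ - 2 * κ) ^ 2
    let argmin : Set (Fin N1 → ℝ) := {x | ∀ y, obj x ≤ obj y}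
    (u2 < u1 → argmin = {((4 * u1 * κ - lam) / (2 * u1 ^ 2)) • e1}) ∧
    (u1 < u2 → argmin = {((4 * u2 * κ - lam) / (2 * u2 ^ 2)) • e2}) ∧
    (u1 = u2 → argmin =
      {x | ∃ t ∈ Set.Icc (0 : ℝ) 1,
        x = ((4 * u1 * κ - lam) / (2 * u1 ^ 2)) • (t • e1 + (1 - t) • e2)}) := by
  intro e1 e2 obj argmin
  set i₀ : Fin N1 := ⟨0, by omega⟩
  set i₁ : Fin N1 := ⟨1, by omega⟩
  have h01 : i₀ ≠ i₁ := by simp [i₀, i₁, Fin.ext_iff]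
  have he1 : e1 = Pi.single i₀ 1 := by ext i; simp [e1, i₀, Pi.single_apply, Fin.ext_iff]
  have he2 : e2 = Pi.single i₁ 1 := by ext i; simp [e2, i₁, Pi.single_apply, Fin.ext_iff]
  have hargmin :
      argmin = minimizers (lassoObjective lam (Pi.single i₀ u1 + Pi.single i₁ u2) (2 * κ)) := by
    simp only [minimizers, lassoObjective_single_add_single]
    rfl
  have hb : lam ≤ 2 * max u1 u2 * (2 * κ) := by
    have := (div_le_iff₀ (by linarith : (0 : ℝ) < 4 * κ)).mp hmax
    linarith
  have h4 : ∀ v, 4 * v * κ = 2 * v * (2 * κ) := fun v => by ring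
  rw [hargmin, he1, he2, h4, h4]
  refine ⟨fun h21 => ?_, fun h12 => ?_, fun h12 => ?_⟩
  · exact minimizers_lassoObjective_single_add_single_of_lt h01 hu2 h21 hlam0
      (by rwa [max_eq_left h21.le] at hb)
  · exact minimizers_lassoObjective_single_add_single_of_gt h01 hu1 h12 hlam0
      (by rwa [max_eq_right h12.le] at hb)
  · subst h12
    exact minimizers_lassoObjective_single_add_single_self h01 hu1 hlam0
      (by rwa [max_self] at hb)
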